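/- Let n ≤ l, 1 ≤ k ≤ 2^n, r ≥ 1, and G = Δ_k^{(n)} ∩ {x : 2^l x mod 1 ∈ Δ_1^{(r)}}. For every m ≥ 1 there exist integers 0 ≤ p < 2^r and 0 ≤ q ≤ 2^n such that S_m(x, 1_G) = 2^{−n−r} D_p(2^l x) D_{2^n}(x ⊕ (k−1)/2^n) + 2^{−n−r} w_{p·2^l}(x) D_q(x ⊕ (k−1)/2^n). -/

import Mathlib

open MeasureTheory Real Set

/-- The `i`-th binary digit of `x ∈ [0,1)` (the coefficient of `2^{-(i+1)}`). -/
noncomputable def dyadicBit (x : ℝ) (i : ℕ) : ℕ := (⌊2 ^ (i + 1) * x⌋).toNat % 2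

/-- Dyadic (mod 2, digit-wise) addition `x ⊕ y` of binary expansions. -/
noncomputable def dyadicAdd (x y : ℝ) : ℝ :=
  ∑' i : ℕ, (if dyadicBit x i = dyadicBit y i then (0 : ℝ) else 1) / 2 ^ (i + 1)

/-- The `n`-th Walsh function on `[0,1)` in the Paley ordering. -/
noncomputable def walsh (n : ℕ) (x : ℝ) : ℝ :=
  ∏ i ∈ Finset.range (n + 1),
    if n.testBit i ∧ dyadicBit x i = 1 then (-1 : ℝ) else 1

/-- The Walsh–Dirichlet kernel `D_m = ∑_{k=0}^{m-1} w_k`. -/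
noncomputable def walshDirichlet (m : ℕ) (x : ℝ) : ℝ :=
  ∑ k ∈ Finset.range m, walsh k x

/-- The `k`-th partial sum of the Walsh–Fourier series of `f`:
`S_k(x,f) = ∫_0^1 D_k(x ⊕ t) f(t) dt`. -/
noncomputable def walshSum (k : ℕ) (f : ℝ → ℝ) (x : ℝ) : ℝ :=
  ∫ t in (0 : ℝ)..1, walshDirichlet k (dyadicAdd x t) * f t

set_option maxHeartbeats 1000000

namespace S14


lemma bit_le_one (x : ℝ) (i : ℕ) : dyadicBit x i ≤ 1 :=
  Nat.lt_succ_iff.mp (Nat.mod_lt _ two_pos)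

lemma bit_eq_natFloor (x : ℝ) (i : ℕ) : dyadicBit x i = ⌊2 ^ (i + 1) * x⌋₊ % 2 := by
  rw [dyadicBit, Int.floor_toNat]

/-- scaling of nat-floors -/
lemma floor_scale (x : ℝ) {j N : ℕ} (h : j ≤ N) :
    ⌊2 ^ j * x⌋₊ = ⌊2 ^ N * x⌋₊ / 2 ^ (N - j) := by
  have : (2 : ℝ) ^ j * x = 2 ^ N * x / (2 ^ (N - j) : ℕ) := by
    push_cast
    rw [eq_div_iff (by positivity)]
    rw [mul_comm ((2:ℝ)^j) x, mul_assoc, ← pow_add]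
    have : j + (N - j) = N := by omega
    rw [this]
    ring
  rw [this, Nat.floor_div_natCast]

/-- digit of the i-th bit from floor at a higher scale -/
lemma bit_eq_testBit_floor (x : ℝ) {i N : ℕ} (h : i < N) :
    dyadicBit x i = (Nat.testBit ⌊2 ^ N * x⌋₊ (N - 1 - i)).toNat := by
  rw [bit_eq_natFloor, Nat.toNat_testBit]
  rw [floor_scale x (show i + 1 ≤ N by omega)]
  have : N - (i + 1) = N - 1 - i := by omega
  rw [this]

/-- any point in a dyadic cell has prescribed digits -/
lemma bit_of_mem_cell {s N : ℕ} {t : ℝ} (h1 : (s : ℝ) / 2 ^ N ≤ t)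
    (h2 : t < (s + 1 : ℕ) / 2 ^ N) {i : ℕ} (hi : i < N) :
    dyadicBit t i = (Nat.testBit s (N - 1 - i)).toNat := by
  have hfl : ⌊2 ^ N * t⌋₊ = s := by
    have ht0 : (0:ℝ) ≤ t := le_trans (by positivity) h1
    rw [Nat.floor_eq_iff (by positivity)]
    constructor
    · rw [div_le_iff₀ (by positivity)] at h1; linarith [h1]
    · rw [lt_div_iff₀ (by positivity)] at h2; push_cast at h2 ⊢; linarith [h2]
  rw [bit_eq_testBit_floor t hi, hfl]



lemma inf_zero_bits {x : ℝ} (hx : x ∈ Set.Ico (0:ℝ) 1) (N : ℕ) :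
    ∃ i, N ≤ i ∧ dyadicBit x i = 0 := by
  by_contra hcon
  push_neg at hcon
  have hone : ∀ i, N ≤ i → dyadicBit x i = 1 := fun i hi =>
    Nat.le_antisymm (bit_le_one x i) (Nat.one_le_iff_ne_zero.2 (hcon i hi))
  set g : ℕ → ℕ := fun i => ⌊2 ^ i * x⌋₊ with hg
  have hrec : ∀ i, N ≤ i → g (i + 1) = 2 * g i + 1 := by
    intro i hi
    have h1 : g i = g (i + 1) / 2 := by
      simpa using floor_scale x (show i ≤ i + 1 by omega)
    have h2 : g (i + 1) % 2 = 1 := by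
      have := hone i hi
      rw [bit_eq_natFloor] at this
      exact this
    omega
  have hind : ∀ M, g (N + M) + 1 = 2 ^ M * (g N + 1) := by
    intro M
    induction M with
    | zero => simp
    | succ M ih =>
      have h1 := hrec (N + M) (by omega)
      have h2 : N + (M + 1) = (N + M) + 1 := by omega
      calc g (N + (M + 1)) + 1 = 2 * (g (N + M) + 1) := by rw [h2, h1]; ring
        _ = 2 ^ (M + 1) * (g N + 1) := by rw [ih]; ring
  have hub : ∀ M : ℕ, ((g N : ℝ) + 1) ≤ 2 ^ N * x + (1/2) ^ M := by
    intro M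
    have hle : ((g (N + M) : ℝ)) ≤ 2 ^ (N + M) * x := by
      apply Nat.floor_le
      have := hx.1; positivity
    have hcast : ((g (N + M) : ℝ)) + 1 = 2 ^ M * ((g N : ℝ) + 1) := by
      exact_mod_cast congrArg (Nat.cast : ℕ → ℝ) (hind M)
    have h2M : (0:ℝ) < 2 ^ M := by positivity
    rw [pow_add] at hle
    have hA : 2 ^ M * ((g N : ℝ) + 1) ≤ 2 ^ N * 2 ^ M * x + 1 := by
      rw [← hcast]; nlinarith [hle]
    have h12 : ((1:ℝ)/2) ^ M = (2 ^ M)⁻¹ := by rw [one_div, inv_pow]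
    have hinv : (2:ℝ) ^ M * (2 ^ M)⁻¹ = 1 := mul_inv_cancel₀ (ne_of_gt h2M)
    rw [h12]
    nlinarith [hA, hinv, h2M]
  have hlt : 2 ^ N * x < (g N : ℝ) + 1 := by
    have := Nat.lt_floor_add_one (2 ^ N * x)
    simpa [hg] using this
  set δ := ((g N : ℝ) + 1) - 2 ^ N * x with hδ
  have hδpos : 0 < δ := by simp [hδ]; linarith
  obtain ⟨M, hM⟩ := exists_pow_lt_of_lt_one hδpos (by norm_num : (1:ℝ)/2 < 1)
  have h1 := hub M
  rw [show ((1:ℝ)/2) ^ M = (2 ^ M)⁻¹ by rw [one_div, inv_pow]] at h1 hM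
  simp only [hδ] at hM
  linarith

lemma partial_sum_bits {x : ℝ} (hx : x ∈ Set.Ico (0:ℝ) 1) (N : ℕ) :
    ∑ i ∈ Finset.range N, (dyadicBit x i : ℝ) / 2 ^ (i + 1) = ⌊2 ^ N * x⌋₊ / 2 ^ N := by
  induction N with
  | zero =>
    simp [Nat.floor_eq_zero.2 (by simpa using hx.2)]
  | succ N ih =>
    rw [Finset.sum_range_succ, ih]
    have h1 : ⌊2 ^ N * x⌋₊ = ⌊2 ^ (N + 1) * x⌋₊ / 2 := by
      simpa using floor_scale x (show N ≤ N + 1 by omega)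
    rw [bit_eq_natFloor, h1]
    have key : (2 * (⌊2 ^ (N + 1) * x⌋₊ / 2) + ⌊2 ^ (N + 1) * x⌋₊ % 2) = ⌊2 ^ (N + 1) * x⌋₊ := by
      omega
    have : ((⌊2 ^ (N + 1) * x⌋₊ / 2 : ℕ) : ℝ) / 2 ^ N + (⌊2 ^ (N + 1) * x⌋₊ % 2 : ℕ) / 2 ^ (N + 1)
        = ((2 * (⌊2 ^ (N + 1) * x⌋₊ / 2) + ⌊2 ^ (N + 1) * x⌋₊ % 2 : ℕ) : ℝ) / 2 ^ (N + 1) := by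
      push_cast
      field_simp
      ring
    rw [this, key]

lemma summable_bits (b : ℕ → ℕ) (hb : ∀ i, b i ≤ 1) :
    Summable (fun i => (b i : ℝ) / 2 ^ (i + 1)) := by
  apply Summable.of_nonneg_of_le (fun i => by positivity)
    (fun i => ?_) (summable_geometric_two.mul_left (1/2))
  have : ((b i : ℝ)) ≤ 1 := by exact_mod_cast hb i
  have h2 : (0:ℝ) < 2 ^ (i+1) := by positivity
  calc (b i : ℝ) / 2 ^ (i + 1) ≤ 1 / 2 ^ (i+1) := by gcongr
    _ = 1/2 * (1/2)^i := by rw [pow_succ, one_div_pow]; ring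

lemma bits_tsum_self {x : ℝ} (hx : x ∈ Set.Ico (0:ℝ) 1) :
    ∑' i, (dyadicBit x i : ℝ) / 2 ^ (i + 1) = x := by
  have hsum := summable_bits (dyadicBit x) (bit_le_one x)
  have htend := hsum.hasSum.tendsto_sum_nat
  have hge0 : (0:ℝ) ≤ x := hx.1
  have hlow : Filter.Tendsto (fun N : ℕ => x - (1/2:ℝ)^N) Filter.atTop (nhds x) := by
    have := tendsto_pow_atTop_nhds_zero_of_lt_one (by norm_num : (0:ℝ) ≤ 1/2)
      (by norm_num : (1:ℝ)/2 < 1)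
    simpa using (tendsto_const_nhds (x := x)).sub this
  have h2 : Filter.Tendsto (fun N => ∑ i ∈ Finset.range N, (dyadicBit x i : ℝ) / 2 ^ (i + 1))
      Filter.atTop (nhds x) := by
    apply tendsto_of_tendsto_of_tendsto_of_le_of_le hlow tendsto_const_nhds
    · intro N
      show x - (1/2:ℝ)^N ≤ ∑ i ∈ Finset.range N, (dyadicBit x i : ℝ) / 2 ^ (i + 1)
      rw [partial_sum_bits hx N]
      have hlt := Nat.lt_floor_add_one (2 ^ N * x)
      have h2N : (0:ℝ) < 2 ^ N := by positivity
      rw [sub_le_iff_le_add]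
      rw [div_add' _ _ _ (ne_of_gt h2N)]
      rw [le_div_iff₀ h2N]
      have : ((1:ℝ)/2) ^ N * 2 ^ N = 1 := by
        rw [one_div, inv_pow]
        exact inv_mul_cancel₀ (ne_of_gt h2N)
      nlinarith [hlt]
    · intro N
      show ∑ i ∈ Finset.range N, (dyadicBit x i : ℝ) / 2 ^ (i + 1) ≤ x
      rw [partial_sum_bits hx N]
      rw [div_le_iff₀ (by positivity : (0:ℝ) < 2 ^ N)]
      have := Nat.floor_le (show (0:ℝ) ≤ 2 ^ N * x by positivity)
      linarith
  exact tendsto_nhds_unique htend h2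


lemma tail_lt {b : ℕ → ℕ} (hb : ∀ i, b i ≤ 1) {N : ℕ}
    (hz : ∃ i, N ≤ i ∧ b i = 0) :
    ∑' i, (b (N + i) : ℝ) / 2 ^ (N + i + 1) < (1/2) ^ N := by
  obtain ⟨i0, hi0N, hi00⟩ := hz
  set j0 := i0 - N with hj0
  have hNj0 : N + j0 = i0 := by omega
  have hsum : Summable (fun i => (b (N + i) : ℝ) / 2 ^ (N + i + 1)) := by
    have := (summable_nat_add_iff N).2 (summable_bits b hb)
    simpa [add_comm] using this
  have hgeo : Summable (fun i : ℕ => ((1:ℝ)/2) ^ (N + i + 1)) := by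
    apply Summable.of_nonneg_of_le (fun i => by positivity) (fun i => le_of_eq ?_)
      (summable_geometric_two.mul_left ((1/2)^(N+1)))
    rw [pow_add, pow_add]; ring
  have hg : Summable (fun i : ℕ => if i = j0 then (0:ℝ) else (1/2) ^ (N + i + 1)) := by
    apply Summable.of_nonneg_of_le (fun i => by positivity) (fun i => ?_) hgeo
    by_cases h : i = j0 <;> simp [h] <;> positivity
  have hle : ∑' i, (b (N + i) : ℝ) / 2 ^ (N + i + 1)
      ≤ ∑' i, if i = j0 then (0:ℝ) else (1/2) ^ (N + i + 1) := by
    apply Summable.tsum_le_tsum _ hsum hg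
    intro i
    by_cases h : i = j0
    · simp [h, hNj0, hi00]
    · simp only [h, if_false]
      rw [div_le_iff₀ (by positivity)]
      rw [one_div, inv_pow]
      rw [inv_mul_cancel₀ (by positivity)]
      exact_mod_cast hb (N + i)
  have heval : ∑' i, (if i = j0 then (0:ℝ) else (1/2) ^ (N + i + 1))
      = (1/2) ^ N - (1/2) ^ (N + j0 + 1) := by
    have hsplit : ∀ i : ℕ, (if i = j0 then (0:ℝ) else (1/2) ^ (N + i + 1))
        = (1/2) ^ (N + i + 1) - (if i = j0 then ((1:ℝ)/2) ^ (N + j0 + 1) else 0) := by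
      intro i; by_cases h : i = j0 <;> simp [h]
    rw [tsum_congr hsplit, Summable.tsum_sub hgeo ⟨_, hasSum_ite_eq j0 _⟩]
    have h1 : ∑' i : ℕ, ((1:ℝ)/2) ^ (N + i + 1) = (1/2) ^ N := by
      have : ∀ i : ℕ, ((1:ℝ)/2) ^ (N + i + 1) = (1/2)^(N+1) * (1/2) ^ i := by
        intro i; rw [pow_add, pow_add]; ring
      rw [tsum_congr this, tsum_mul_left, tsum_geometric_two]
      rw [pow_succ]; ring
    rw [h1, tsum_ite_eq]
  have hpos : (0:ℝ) < (1/2) ^ (N + j0 + 1) := by positivity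
  linarith [hle, heval.le, heval.ge]

lemma reconstruct {b : ℕ → ℕ} (hb : ∀ i, b i ≤ 1)
    (hz : ∀ N, ∃ i, N ≤ i ∧ b i = 0) :
    (∑' i, (b i : ℝ) / 2 ^ (i + 1)) ∈ Set.Ico (0:ℝ) 1 ∧
      ∀ i, dyadicBit (∑' i, (b i : ℝ) / 2 ^ (i + 1)) i = b i := by
  set y := ∑' i, (b i : ℝ) / 2 ^ (i + 1) with hy
  have hsum := summable_bits b hb
  have hsplit : ∀ N : ℕ, y = (∑ i ∈ Finset.range N, (b i : ℝ) / 2 ^ (i + 1))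
      + ∑' i, (b (N + i) : ℝ) / 2 ^ (N + i + 1) := by
    intro N
    rw [hy, ← Summable.sum_add_tsum_nat_add N hsum]
    congr 1
    exact tsum_congr (fun i => by rw [add_comm i N])
  have htail0 : ∀ N : ℕ, (0:ℝ) ≤ ∑' i, (b (N + i) : ℝ) / 2 ^ (N + i + 1) := by
    intro N; exact tsum_nonneg (fun i => by positivity)
  have hmem : y ∈ Set.Ico (0:ℝ) 1 := by
    constructor
    · rw [hy]; exact tsum_nonneg (fun i => by positivity)
    · have hT := tail_lt hb (hz 0)
      simp only [zero_add, pow_zero] at hT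
      rw [hy]; exact hT
  have hfloor : ∀ N : ℕ, ⌊2 ^ N * y⌋₊ = ∑ i ∈ Finset.range N, b i * 2 ^ (N - 1 - i) := by
    intro N
    have hT := tail_lt hb (hz N)
    have hT0 := htail0 N
    have hcast : 2 ^ N * (∑ i ∈ Finset.range N, (b i : ℝ) / 2 ^ (i + 1))
        = ((∑ i ∈ Finset.range N, b i * 2 ^ (N - 1 - i) : ℕ) : ℝ) := by
      push_cast
      rw [Finset.mul_sum]
      apply Finset.sum_congr rfl
      intro i hi
      have hiN : i < N := Finset.mem_range.1 hi
      have : (2:ℝ) ^ N = 2 ^ (i + 1) * 2 ^ (N - 1 - i) := by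
        rw [← pow_add]; congr 1; omega
      rw [this]
      field_simp
    have h2NT : (0:ℝ) ≤ 2 ^ N * ∑' i, (b (N + i) : ℝ) / 2 ^ (N + i + 1) :=
      mul_nonneg (by positivity) hT0
    rw [Nat.floor_eq_iff (mul_nonneg (by positivity) hmem.1)]
    constructor
    · rw [hsplit N, mul_add, hcast]; linarith
    · rw [hsplit N, mul_add, hcast]
      have : 2 ^ N * ∑' i, (b (N + i) : ℝ) / 2 ^ (N + i + 1) < 1 := by
        have h2N : (0:ℝ) < 2 ^ N := by positivity
        have := mul_lt_mul_of_pos_left hT h2N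
        rw [show (2:ℝ) ^ N * (1/2) ^ N = 1 by
          rw [one_div, inv_pow]; exact mul_inv_cancel₀ (by positivity)] at this
        exact this
      linarith
  refine ⟨hmem, fun i => ?_⟩
  rw [bit_eq_natFloor, hfloor (i + 1)]
  have hsum_split : ∑ j ∈ Finset.range (i + 1), b j * 2 ^ (i + 1 - 1 - j)
      = 2 * (∑ j ∈ Finset.range i, b j * 2 ^ (i - 1 - j)) + b i := by
    rw [Finset.sum_range_succ, Finset.mul_sum]
    have h1 : b i * 2 ^ (i + 1 - 1 - i) = b i := by
      rw [show i + 1 - 1 - i = 0 by omega, pow_zero, mul_one]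
    rw [h1]
    congr 1
    apply Finset.sum_congr rfl
    intro j hj
    have hji : j < i := Finset.mem_range.1 hj
    rw [show i + 1 - 1 - j = (i - 1 - j) + 1 by omega, pow_succ]
    ring
  rw [hsum_split]
  have := hb i
  omega


lemma walsh_eq_prod (j : ℕ) {N : ℕ} (h : j < 2 ^ N) (x : ℝ) :
    walsh j x = ∏ i ∈ Finset.range N,
      if j.testBit i ∧ dyadicBit x i = 1 then (-1:ℝ) else 1 := by
  have gen : ∀ M K : ℕ, M ≤ K → j < 2 ^ M →
      ∏ i ∈ Finset.range K, (if j.testBit i ∧ dyadicBit x i = 1 then (-1:ℝ) else 1)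
      = ∏ i ∈ Finset.range M, (if j.testBit i ∧ dyadicBit x i = 1 then (-1:ℝ) else 1) := by
    intro M K hMK hjM
    symm
    apply Finset.prod_subset (Finset.range_subset_range.2 hMK)
    intro i hiK hiM
    have hiM' : M ≤ i := Nat.not_lt.1 (fun hc => hiM (Finset.mem_range.2 hc))
    have htb : j.testBit i = false := Nat.testBit_eq_false_of_lt
      (lt_of_lt_of_le hjM (Nat.pow_le_pow_right (by norm_num) hiM'))
    simp [htb]
  have hj1 : j < 2 ^ (j + 1) :=
    lt_of_lt_of_le (Nat.lt_two_pow_self) (Nat.pow_le_pow_right (by norm_num) (Nat.le_succ _))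
  have e1 := gen (j + 1) (max (j + 1) N) (le_max_left _ _) hj1
  have e2 := gen N (max (j + 1) N) (le_max_right _ _) h
  rw [walsh, ← e1, e2]

lemma bit_dyadic_rat_low {s0 n : ℕ} (h : s0 < 2 ^ n) {i : ℕ} (hi : i < n) :
    dyadicBit ((s0 : ℝ) / 2 ^ n) i = (s0.testBit (n - 1 - i)).toNat := by
  apply bit_of_mem_cell le_rfl _ hi
  have h2n : (0:ℝ) < 2 ^ n := by positivity
  rw [div_lt_div_iff_of_pos_right h2n]
  push_cast
  linarith

lemma bit_dyadic_rat_high {s0 n : ℕ} (h : s0 < 2 ^ n) {i : ℕ} (hi : n ≤ i) :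
    dyadicBit ((s0 : ℝ) / 2 ^ n) i = 0 := by
  rw [bit_eq_natFloor]
  have hcast : (2:ℝ) ^ (i+1) * ((s0:ℝ) / 2 ^ n) = ((2 ^ (i + 1 - n) * s0 : ℕ) : ℝ) := by
    push_cast
    rw [show (2:ℝ) ^ (i+1) = 2 ^ (i+1-n) * 2 ^ n by rw [← pow_add]; congr 1; omega]
    field_simp
  rw [hcast, Nat.floor_natCast]
  have : 2 ^ (i + 1 - n) * s0 = 2 * (2 ^ (i - n) * s0) := by
    rw [show i + 1 - n = (i - n) + 1 by omega, pow_succ]; ring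
  omega

lemma bit_fract_shift {t : ℝ} (ht : 0 ≤ t) (l i : ℕ) :
    dyadicBit (Int.fract (2 ^ l * t)) i = dyadicBit t (l + i) := by
  unfold dyadicBit
  have hfr : Int.fract (2 ^ l * t) = 2 ^ l * t - (⌊2 ^ l * t⌋ : ℝ) := by
    have := Int.floor_add_fract (2 ^ l * t)
    linarith
  have hexp : (2:ℝ) ^ (i + 1) * Int.fract (2 ^ l * t)
      = 2 ^ (l + i + 1) * t - ((2 ^ (i + 1) * ⌊2 ^ l * t⌋ : ℤ) : ℝ) := by
    rw [hfr]
    push_cast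
    rw [show (2:ℝ) ^ (l + i + 1) = 2 ^ (i + 1) * 2 ^ l by rw [← pow_add]; congr 1; omega]
    ring
  have hfl : ⌊2 ^ (i + 1) * Int.fract (2 ^ l * t)⌋
      = ⌊2 ^ (l + i + 1) * t⌋ - 2 ^ (i + 1) * ⌊2 ^ l * t⌋ := by
    rw [hexp, Int.floor_sub_intCast]
  have hA : (0:ℤ) ≤ ⌊2 ^ (l + i + 1) * t⌋ := Int.floor_nonneg.2 (by positivity)
  have hval : (0:ℤ) ≤ ⌊2 ^ (l + i + 1) * t⌋ - 2 ^ (i + 1) * ⌊2 ^ l * t⌋ := by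
    rw [← hfl]
    exact Int.floor_nonneg.2 (mul_nonneg (by positivity) (Int.fract_nonneg _))
  rw [hfl]
  have h2 : (2:ℤ) ^ (i + 1) * ⌊2 ^ l * t⌋ = 2 * (2 ^ i * ⌊2 ^ l * t⌋) := by
    rw [pow_succ]; ring
  rw [h2] at hval ⊢
  have : l + i + 1 = (l + i) + 1 := rfl
  omega

lemma dyadicAdd_bits {x z : ℝ}
    (hgood : ∀ N, ∃ i, N ≤ i ∧ dyadicBit x i = dyadicBit z i) :
    dyadicAdd x z ∈ Set.Ico (0:ℝ) 1 ∧
      ∀ i, dyadicBit (dyadicAdd x z) i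
        = (if dyadicBit x i = dyadicBit z i then 0 else 1) := by
  have hb : ∀ i, (if dyadicBit x i = dyadicBit z i then 0 else 1) ≤ 1 := by
    intro i; split <;> omega
  have hz : ∀ N, ∃ i, N ≤ i ∧ (if dyadicBit x i = dyadicBit z i then 0 else 1) = 0 := by
    intro N
    obtain ⟨i, hi, he⟩ := hgood N
    exact ⟨i, hi, by simp [he]⟩
  have := reconstruct hb hz
  have hre : dyadicAdd x z = ∑' i, ((if dyadicBit x i = dyadicBit z i then 0 else 1 : ℕ) : ℝ) / 2 ^ (i + 1) := by
    unfold dyadicAdd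
    congr 1
    funext i
    split <;> simp
  rw [hre]
  exact this

lemma walsh_dyadicAdd {x z : ℝ}
    (hgood : ∀ N, ∃ i, N ≤ i ∧ dyadicBit x i = dyadicBit z i) (j : ℕ) :
    walsh j (dyadicAdd x z) = walsh j x * walsh j z := by
  unfold walsh
  rw [← Finset.prod_mul_distrib]
  apply Finset.prod_congr rfl
  intro i _
  rw [(dyadicAdd_bits hgood).2 i]
  have hx1 : dyadicBit x i = 0 ∨ dyadicBit x i = 1 := by have := bit_le_one x i; omega
  have hz1 : dyadicBit z i = 0 ∨ dyadicBit z i = 1 := by have := bit_le_one z i; omega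
  by_cases hj : j.testBit i
  · rcases hx1 with hx | hx <;> rcases hz1 with hz | hz <;> simp [hj, hx, hz]
  · simp [hj]

lemma walsh_eq_one {j : ℕ} {x : ℝ} (h : ∀ i, j.testBit i = true → dyadicBit x i = 0) :
    walsh j x = 1 := by
  unfold walsh
  apply Finset.prod_eq_one
  intro i _
  rw [if_neg]
  rintro ⟨h1, h2⟩
  rw [h i h1] at h2
  omega

lemma walsh_mul_split {v u l : ℕ} (hu : u < 2 ^ l) (x : ℝ) :
    walsh (v * 2 ^ l + u) x = walsh (v * 2 ^ l) x * walsh u x := by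
  set N := v * 2 ^ l + u + 1 with hN
  have h1 : v * 2 ^ l + u < 2 ^ N :=
    lt_of_lt_of_le (Nat.lt_two_pow_self) (Nat.pow_le_pow_right (by norm_num) (Nat.le_succ _))
  have h2 : v * 2 ^ l < 2 ^ N := lt_of_le_of_lt (Nat.le_add_right _ _) h1
  have h3 : u < 2 ^ N := lt_of_le_of_lt (Nat.le_add_left _ _) h1
  rw [walsh_eq_prod _ h1, walsh_eq_prod _ h2, walsh_eq_prod _ h3, ← Finset.prod_mul_distrib]
  apply Finset.prod_congr rfl
  intro i _
  have htb : (v * 2 ^ l + u).testBit i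
      = if i < l then u.testBit i else v.testBit (i - l) := by
    rw [show v * 2 ^ l + u = 2 ^ l * v + u by ring]
    exact Nat.testBit_two_pow_mul_add v hu i
  have htb2 : (v * 2 ^ l).testBit i = (decide (i ≥ l) && v.testBit (i - l)) := by
    rw [show v * 2 ^ l = 2 ^ l * v by ring]
    exact Nat.testBit_two_pow_mul
  by_cases hil : i < l
  · have hu2 : (v * 2 ^ l).testBit i = false := by
      rw [htb2]; simp [Nat.not_le.2 hil]
    rw [htb, if_pos hil, hu2]
    simp
  · have hu2 : u.testBit i = false := Nat.testBit_eq_false_of_lt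
      (lt_of_lt_of_le hu (Nat.pow_le_pow_right (by norm_num) (Nat.not_lt.1 hil)))
    rw [htb, if_neg hil, htb2, hu2]
    simp [Nat.not_lt.1 hil]

lemma walsh_shift {v l : ℕ} {x : ℝ} (hx : 0 ≤ x) :
    walsh (v * 2 ^ l) x = walsh v (Int.fract (2 ^ l * x)) := by
  have hv : v * 2 ^ l < 2 ^ (l + (v + 1)) := by
    rw [pow_add]
    have hv2 : v < 2 ^ (v + 1) :=
      lt_of_lt_of_le (Nat.lt_two_pow_self) (Nat.pow_le_pow_right (by norm_num) (Nat.le_succ _))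
    calc v * 2 ^ l < 2 ^ (v + 1) * 2 ^ l :=
          (Nat.mul_lt_mul_right (Nat.two_pow_pos l)).2 hv2
      _ = 2 ^ l * 2 ^ (v + 1) := by ring
  rw [walsh_eq_prod _ hv, walsh, Finset.prod_range_add]
  have hleft : ∀ i ∈ Finset.range l,
      (if (v * 2 ^ l).testBit i ∧ dyadicBit x i = 1 then (-1:ℝ) else 1) = 1 := by
    intro i hi
    have : (v * 2 ^ l).testBit i = false := by
      rw [show v * 2 ^ l = 2 ^ l * v by ring, Nat.testBit_two_pow_mul]
      simp [Nat.not_le.2 (Finset.mem_range.1 hi)]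
    simp [this]
  rw [Finset.prod_congr rfl hleft, Finset.prod_const_one, one_mul]
  apply Finset.prod_congr rfl
  intro i _
  have ht : (v * 2 ^ l).testBit (l + i) = v.testBit i := by
    rw [show v * 2 ^ l = 2 ^ l * v by ring, Nat.testBit_two_pow_mul]
    simp
  rw [ht, bit_fract_shift hx l i]


lemma sum_prod_bits (M : ℕ) (h : ℕ → ℕ → ℝ) :
    ∑ s ∈ Finset.range (2 ^ M), ∏ i ∈ Finset.range M, h i ((s.testBit i).toNat)
    = ∏ i ∈ Finset.range M, (h i 0 + h i 1) := by
  induction M with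
  | zero => simp
  | succ M ih =>
    rw [show (2:ℕ) ^ (M + 1) = 2 ^ M + 2 ^ M by rw [pow_succ]; omega]
    rw [Finset.sum_range_add]
    have e1 : ∀ s ∈ Finset.range (2 ^ M),
        ∏ i ∈ Finset.range (M + 1), h i ((s.testBit i).toNat)
        = (∏ i ∈ Finset.range M, h i ((s.testBit i).toNat)) * h M 0 := by
      intro s hs
      rw [Finset.prod_range_succ]
      congr 2
      rw [Nat.testBit_eq_false_of_lt (Finset.mem_range.1 hs)]
      rfl
    have e2 : ∀ s ∈ Finset.range (2 ^ M),
        ∏ i ∈ Finset.range (M + 1), h i (((2 ^ M + s).testBit i).toNat)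
        = (∏ i ∈ Finset.range M, h i ((s.testBit i).toNat)) * h M 1 := by
      intro s hs
      have hs' := Finset.mem_range.1 hs
      have htb : ∀ i : ℕ, (2 ^ M + s).testBit i
          = if i < M then s.testBit i else Nat.testBit 1 (i - M) := by
        intro i
        have := Nat.testBit_two_pow_mul_add 1 hs' i
        simpa [mul_one] using this
      rw [Finset.prod_range_succ]
      congr 1
      · apply Finset.prod_congr rfl
        intro i hi
        rw [htb i, if_pos (Finset.mem_range.1 hi)]
      · rw [htb M, if_neg (lt_irrefl M), Nat.sub_self]
        rfl
    rw [Finset.sum_congr rfl e1, Finset.sum_congr rfl e2, ← Finset.sum_mul, ← Finset.sum_mul,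
      ih, Finset.prod_range_succ, ← mul_add]

lemma sum_prod_bits' (M : ℕ) (g : ℕ → ℕ → ℝ) :
    ∑ s ∈ Finset.range (2 ^ M), ∏ i ∈ Finset.range M, g i ((s.testBit (M - 1 - i)).toNat)
    = ∏ i ∈ Finset.range M, (g i 0 + g i 1) := by
  have key := sum_prod_bits M (fun i b => g (M - 1 - i) b)
  have e1 : ∀ s : ℕ, ∏ i ∈ Finset.range M, g i ((s.testBit (M - 1 - i)).toNat)
      = ∏ i ∈ Finset.range M, g (M - 1 - i) ((s.testBit i).toNat) := by
    intro s
    rw [← Finset.prod_range_reflect (fun i => g (M - 1 - i) ((s.testBit i).toNat)) M]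
    apply Finset.prod_congr rfl
    intro i hi
    have hiM := Finset.mem_range.1 hi
    congr 2
    omega
  have e2 : ∏ i ∈ Finset.range M, (g i 0 + g i 1)
      = ∏ i ∈ Finset.range M, (g (M - 1 - i) 0 + g (M - 1 - i) 1) := by
    rw [← Finset.prod_range_reflect (fun i => g (M - 1 - i) 0 + g (M - 1 - i) 1) M]
    apply Finset.prod_congr rfl
    intro i hi
    have hiM := Finset.mem_range.1 hi
    congr 2 <;> omega
  rw [Finset.sum_congr rfl (fun s _ => e1 s), key, ← e2]

lemma piece_integral {α β c : ℝ} (hab : α ≤ β) {f : ℝ → ℝ}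
    (h : ∀ t ∈ Set.Ico α β, f t = c) :
    IntervalIntegrable f volume α β ∧ ∫ t in α..β, f t = (β - α) * c := by
  have hres : f =ᵐ[volume.restrict (Set.Ioc α β)] fun _ => c := by
    rw [← Measure.restrict_congr_set Ico_ae_eq_Ioc]
    exact ae_restrict_of_forall_mem measurableSet_Ico h
  have hint : IntervalIntegrable f volume α β := by
    rw [intervalIntegrable_iff_integrableOn_Ioc_of_le hab]
    exact (integrableOn_const measure_Ioc_lt_top.ne).congr hres.symm
  refine ⟨hint, ?_⟩
  have hae : ∀ᵐ t ∂(volume : Measure ℝ), t ∈ Set.uIoc α β → f t = c := by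
    rw [Set.uIoc_of_le hab]
    exact (ae_restrict_iff' measurableSet_Ioc).1 hres
  rw [intervalIntegral.integral_congr_ae hae, intervalIntegral.integral_const, smul_eq_mul,
    mul_comm]

lemma step_integral (N : ℕ) (f : ℝ → ℝ) (g : ℕ → ℕ → ℝ)
    (hf : ∀ t ∈ Set.Ico (0:ℝ) 1, f t = ∏ i ∈ Finset.range N, g i (dyadicBit t i)) :
    IntervalIntegrable f volume 0 1 ∧
    ∫ t in (0:ℝ)..1, f t = (∏ i ∈ Finset.range N, (g i 0 + g i 1)) / 2 ^ N := by
  set a : ℕ → ℝ := fun s => s / 2 ^ N with ha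
  have h2N : (0:ℝ) < 2 ^ N := by positivity
  have key : ∀ s, s < 2 ^ N → IntervalIntegrable f volume (a s) (a (s + 1)) ∧
      ∫ t in a s..a (s + 1), f t
        = (∏ i ∈ Finset.range N, g i ((Nat.testBit s (N - 1 - i)).toNat)) / 2 ^ N := by
    intro s hs
    have hab : a s ≤ a (s + 1) := by
      rw [ha]; simp only
      rw [div_le_div_iff_of_pos_right h2N]
      push_cast; linarith
    have hmem : ∀ t ∈ Set.Ico (a s) (a (s + 1)), t ∈ Set.Ico (0:ℝ) 1 := by
      intro t ht
      constructor
      · refine le_trans ?_ ht.1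
        rw [ha]; positivity
      · refine lt_of_lt_of_le ht.2 ?_
        rw [ha]; simp only
        rw [div_le_one h2N]
        push_cast
        have : (s:ℝ) + 1 ≤ 2 ^ N := by exact_mod_cast hs
        linarith
    have hconst : ∀ t ∈ Set.Ico (a s) (a (s + 1)),
        f t = ∏ i ∈ Finset.range N, g i ((Nat.testBit s (N - 1 - i)).toNat) := by
      intro t ht
      rw [hf t (hmem t ht)]
      apply Finset.prod_congr rfl
      intro i hi
      congr 1
      have h1 : (s : ℝ) / 2 ^ N ≤ t := ht.1
      have h2 : t < ((s + 1 : ℕ) : ℝ) / 2 ^ N := by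
        have := ht.2
        rw [ha] at this
        simpa using this
      exact bit_of_mem_cell h1 h2 (Finset.mem_range.1 hi)
    obtain ⟨hint, hval⟩ := piece_integral hab hconst
    refine ⟨hint, ?_⟩
    rw [hval]
    have : a (s + 1) - a s = 1 / 2 ^ N := by
      rw [ha]; simp only
      push_cast
      field_simp
      ring
    rw [this]
    ring
  have hsum := intervalIntegral.sum_integral_adjacent_intervals
    (fun s hs => (key s hs).1)
  have ha0 : a 0 = 0 := by rw [ha]; simp
  have ha1 : a (2 ^ N) = 1 := by
    rw [ha]; simp only
    rw [div_eq_one_iff_eq (ne_of_gt h2N)]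
    push_cast; ring
  constructor
  · have := IntervalIntegrable.trans_iterate (fun s hs => (key s hs).1)
    rwa [ha0, ha1] at this
  · rw [← ha0, ← ha1, ← hsum]
    rw [Finset.sum_congr rfl (fun s hs => (key s (Finset.mem_range.1 hs)).2)]
    rw [← Finset.sum_div]
    rw [sum_prod_bits' N g]


lemma floor_eq_of_bits {t u : ℝ} (ht : t ∈ Set.Ico (0:ℝ) 1) (hu : u ∈ Set.Ico (0:ℝ) 1)
    {n : ℕ} (h : ∀ i, i < n → dyadicBit t i = dyadicBit u i) :
    ⌊2 ^ n * t⌋₊ = ⌊2 ^ n * u⌋₊ := by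
  have hlt : ∀ v : ℝ, v ∈ Set.Ico (0:ℝ) 1 → ⌊2 ^ n * v⌋₊ < 2 ^ n := by
    intro v hv
    rw [Nat.floor_lt (mul_nonneg (by positivity) hv.1)]
    push_cast
    nlinarith [hv.2, (by positivity : (0:ℝ) < (2:ℝ) ^ n)]
  apply Nat.eq_of_testBit_eq
  intro d
  by_cases hd : d < n
  · have hit : n - 1 - (n - 1 - d) = d := by omega
    have h1 := bit_eq_testBit_floor t (show n - 1 - d < n by omega)
    have h2 := bit_eq_testBit_floor u (show n - 1 - d < n by omega)
    rw [hit] at h1 h2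
    have := h (n - 1 - d) (by omega)
    rw [h1, h2] at this
    revert this
    rcases Nat.testBit ⌊2 ^ n * t⌋₊ d <;> rcases Nat.testBit ⌊2 ^ n * u⌋₊ d <;> simp
  · rw [Nat.testBit_eq_false_of_lt, Nat.testBit_eq_false_of_lt]
    · exact lt_of_lt_of_le (hlt u hu) (Nat.pow_le_pow_right (by norm_num) (by omega))
    · exact lt_of_lt_of_le (hlt t ht) (Nat.pow_le_pow_right (by norm_num) (by omega))

lemma mem_cell_iff {t : ℝ} (ht : t ∈ Set.Ico (0:ℝ) 1) {s0 n : ℕ} (hs0 : s0 < 2 ^ n) :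
    t ∈ Set.Ico ((s0 : ℝ) / 2 ^ n) (((s0 + 1 : ℕ) : ℝ) / 2 ^ n)
      ↔ ∀ i, i < n → dyadicBit t i = dyadicBit ((s0 : ℝ) / 2 ^ n) i := by
  have h2n : (0:ℝ) < 2 ^ n := by positivity
  have hmema : ((s0 : ℝ) / 2 ^ n) ∈ Set.Ico ((s0 : ℝ) / 2 ^ n) (((s0 + 1 : ℕ) : ℝ) / 2 ^ n) := by
    refine ⟨le_rfl, ?_⟩
    rw [div_lt_div_iff_of_pos_right h2n]
    push_cast; linarith
  constructor
  · intro hmem i hi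
    rw [bit_of_mem_cell hmem.1 hmem.2 hi, bit_of_mem_cell hmema.1 hmema.2 hi]
  · intro h
    have ha01 : ((s0 : ℝ) / 2 ^ n) ∈ Set.Ico (0:ℝ) 1 := by
      constructor
      · positivity
      · rw [div_lt_one h2n]; exact_mod_cast hs0
    have hfl := floor_eq_of_bits ht ha01 h
    have ha : ⌊2 ^ n * ((s0 : ℝ) / 2 ^ n)⌋₊ = s0 := by
      rw [show (2:ℝ) ^ n * ((s0 : ℝ) / 2 ^ n) = (s0 : ℝ) by field_simp]
      exact Nat.floor_natCast s0
    rw [ha] at hfl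
    have h1 : (s0 : ℝ) ≤ 2 ^ n * t := by
      rw [← hfl]; exact Nat.floor_le (mul_nonneg (by positivity) ht.1)
    have h2 : 2 ^ n * t < (s0 : ℝ) + 1 := by
      rw [← hfl]; exact Nat.lt_floor_add_one _
    constructor
    · rw [div_le_iff₀ h2n]; linarith
    · rw [lt_div_iff₀ h2n]; push_cast; linarith

lemma bit_zero (i : ℕ) : dyadicBit 0 i = 0 := by
  unfold dyadicBit
  norm_num

lemma fract_lt_iff {t : ℝ} (ht : t ∈ Set.Ico (0:ℝ) 1) (l r : ℕ) :
    Int.fract (2 ^ l * t) < 1 / 2 ^ r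
      ↔ ∀ i, l ≤ i → i < l + r → dyadicBit t i = 0 := by
  set F := Int.fract (2 ^ l * t) with hF
  have hF01 : F ∈ Set.Ico (0:ℝ) 1 := ⟨Int.fract_nonneg _, Int.fract_lt_one _⟩
  have h2r : (0:ℝ) < 2 ^ r := by positivity
  have hshift : ∀ i : ℕ, dyadicBit F i = dyadicBit t (l + i) := fun i =>
    bit_fract_shift ht.1 l i
  have hiff1 : F < 1 / 2 ^ r ↔ ⌊2 ^ r * F⌋₊ = 0 := by
    rw [Nat.floor_eq_zero]
    constructor
    · intro h; rw [mul_comm, ← lt_div_iff₀ h2r]; exact h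
    · intro h; rw [lt_div_iff₀ h2r, mul_comm]; exact h
  rw [hiff1]
  constructor
  · intro h i hli hir
    have : dyadicBit F (i - l) = (Nat.testBit ⌊2 ^ r * F⌋₊ (r - 1 - (i - l))).toNat :=
      bit_eq_testBit_floor F (show i - l < r by omega)
    rw [h, Nat.zero_testBit] at this
    rw [← show l + (i - l) = i by omega, ← hshift]
    simpa using this
  · intro h
    have hz : ∀ i, i < r → dyadicBit F i = dyadicBit (0:ℝ) i := by
      intro i hi
      rw [bit_zero, hshift]
      exact h (l + i) (by omega) (by omega)
    have := floor_eq_of_bits hF01 (by constructor <;> norm_num) hz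
    simpa using this


lemma coeff_eval (n l r : ℕ) (hnl : n ≤ l) (a : ℝ) (G : Set ℝ)
    (hGmem : ∀ t, t ∈ Set.Ico (0:ℝ) 1 → (t ∈ G ↔
      (∀ i, i < n → dyadicBit t i = dyadicBit a i) ∧
        ∀ i, l ≤ i → i < l + r → dyadicBit t i = 0))
    (habit : ∀ i, n ≤ i → dyadicBit a i = 0) (j : ℕ) :
    IntervalIntegrable (fun t => walsh j t * Set.indicator G 1 t) volume 0 1 ∧
    ∫ t in (0:ℝ)..1, walsh j t * Set.indicator G 1 t
      = if j % 2 ^ l < 2 ^ n ∧ j / 2 ^ l < 2 ^ r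
        then (2:ℝ) ^ (-(n:ℤ) - (r:ℤ)) * walsh j a else 0 := by
  set N := max (j + 1) (l + r) with hNdef
  have hN1 : j < 2 ^ N := by
    have h1 : j < 2 ^ (j + 1) :=
      lt_of_lt_of_le (Nat.lt_two_pow_self) (Nat.pow_le_pow_right (by norm_num) (Nat.le_succ _))
    exact lt_of_lt_of_le h1 (Nat.pow_le_pow_right (by norm_num) (le_max_left _ _))
  have hN2 : l + r ≤ N := le_max_right _ _
  set g : ℕ → ℕ → ℝ := fun i b =>
    (if j.testBit i ∧ b = 1 then (-1:ℝ) else 1) *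
    (if i < n then (if b = dyadicBit a i then 1 else 0)
     else if i < l then 1
     else if i < l + r then (if b = 0 then 1 else 0) else 1) with hgdef
  have hf : ∀ t ∈ Set.Ico (0:ℝ) 1, walsh j t * Set.indicator G 1 t
      = ∏ i ∈ Finset.range N, g i (dyadicBit t i) := by
    intro t ht
    rw [hgdef]
    simp only
    rw [Finset.prod_mul_distrib]
    congr 1
    · exact walsh_eq_prod j hN1 t
    · by_cases hG : t ∈ G
      · rw [Set.indicator_of_mem hG]
        symm
        apply Finset.prod_eq_one
        intro i _
        obtain ⟨h1, h2⟩ := (hGmem t ht).1 hG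
        by_cases hin : i < n
        · rw [if_pos hin, if_pos (h1 i hin)]
        · rw [if_neg hin]
          by_cases hil : i < l
          · rw [if_pos hil]
          · rw [if_neg hil]
            by_cases hilr : i < l + r
            · rw [if_pos hilr, if_pos (h2 i (by omega) hilr)]
            · rw [if_neg hilr]
      · rw [Set.indicator_of_notMem hG]
        symm
        rw [hGmem t ht] at hG
        push_neg at hG
        by_cases hc : ∀ i, i < n → dyadicBit t i = dyadicBit a i
        · obtain ⟨i0, hi0l, hi0lr, hi0⟩ := hG hc
          apply Finset.prod_eq_zero (Finset.mem_range.2 (show i0 < N by omega))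
          rw [if_neg (by omega), if_neg (by omega), if_pos hi0lr, if_neg hi0]
        · push_neg at hc
          obtain ⟨i0, hi0n, hi0⟩ := hc
          apply Finset.prod_eq_zero (Finset.mem_range.2 (show i0 < N by omega))
          rw [if_pos hi0n, if_neg hi0]
  obtain ⟨hint, hval⟩ := step_integral N _ g hf
  have hint' : IntervalIntegrable (fun t => walsh j t * Set.indicator G 1 t) volume 0 1 := hint
  refine ⟨hint', ?_⟩
  rw [hval]
  clear hint hint' hval hf
  -- evaluate the per-digit sums
  have habit1 : ∀ i, dyadicBit a i = 0 ∨ dyadicBit a i = 1 := by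
    intro i; have := bit_le_one a i; omega
  have hS : ∀ i : ℕ, g i 0 + g i 1
      = if i < n then (if j.testBit i ∧ dyadicBit a i = 1 then (-1:ℝ) else 1)
        else if i < l then (if j.testBit i then 0 else 2)
        else if i < l + r then 1
        else (if j.testBit i then 0 else 2) := by
    intro i
    rw [hgdef]
    simp only
    by_cases hin : i < n
    · rcases habit1 i with ha0 | ha0 <;> by_cases htb : j.testBit i <;>
        simp [hin, ha0, htb] <;> norm_num
    · by_cases hil : i < l
      · by_cases htb : j.testBit i <;> simp [hin, hil, htb] <;> norm_num
      · by_cases hilr : i < l + r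
        · by_cases htb : j.testBit i <;> simp [hin, hil, hilr, htb] <;> norm_num
        · by_cases htb : j.testBit i <;> simp [hin, hil, hilr, htb] <;> norm_num
  rw [Finset.prod_congr rfl (fun i _ => hS i)]
  by_cases hcond : j % 2 ^ l < 2 ^ n ∧ j / 2 ^ l < 2 ^ r
  · rw [if_pos hcond]
    obtain ⟨hc1, hc2⟩ := hcond
    have htbf1 : ∀ i, n ≤ i → i < l → j.testBit i = false := by
      intro i hni hil
      have h1 : j.testBit i = (j % 2 ^ l).testBit i := by
        rw [Nat.testBit_mod_two_pow]
        simp [hil]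
      rw [h1]
      exact Nat.testBit_eq_false_of_lt
        (lt_of_lt_of_le hc1 (Nat.pow_le_pow_right (by norm_num) hni))
    have htbf2 : ∀ i, l + r ≤ i → j.testBit i = false := by
      intro i hi
      have h1 : j.testBit i = (j / 2 ^ l).testBit (i - l) := by
        rw [← Nat.shiftRight_eq_div_pow, Nat.testBit_shiftRight]
        congr 1
        omega
      rw [h1]
      exact Nat.testBit_eq_false_of_lt
        (lt_of_lt_of_le hc2 (Nat.pow_le_pow_right (by norm_num) (by omega)))
    -- split the product over [0,n), [n,l), [l,l+r), [l+r,N)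
    have hNsplit : N = n + ((l - n) + (r + (N - l - r))) := by omega
    have hNsplit' : Finset.range N = Finset.range (n + ((l - n) + (r + (N - l - r)))) := by
      rw [← hNsplit]
    rw [hNsplit', Finset.prod_range_add, Finset.prod_range_add, Finset.prod_range_add]
    have e1 : ∏ i ∈ Finset.range n,
        (if i < n then (if j.testBit i ∧ dyadicBit a i = 1 then (-1:ℝ) else 1)
          else if i < l then (if j.testBit i then 0 else 2)
          else if i < l + r then 1 else (if j.testBit i then 0 else 2))
        = walsh j a := by
      rw [walsh_eq_prod j hN1 a, hNsplit, Finset.prod_range_add]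
      have : ∏ i ∈ Finset.range ((l - n) + (r + (N - l - r))),
          (if j.testBit (n + i) ∧ dyadicBit a (n + i) = 1 then (-1:ℝ) else 1) = 1 := by
        apply Finset.prod_eq_one
        intro i _
        rw [if_neg]
        rintro ⟨_, hb⟩
        rw [habit (n + i) (by omega)] at hb
        omega
      rw [this, mul_one]
      apply Finset.prod_congr rfl
      intro i hi
      rw [if_pos (Finset.mem_range.1 hi)]
    have e2 : ∏ i ∈ Finset.range (l - n),
        (if n + i < n then (if j.testBit (n + i) ∧ dyadicBit a (n + i) = 1 then (-1:ℝ) else 1)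
          else if n + i < l then (if j.testBit (n + i) then 0 else 2)
          else if n + i < l + r then 1 else (if j.testBit (n + i) then 0 else 2))
        = 2 ^ (l - n) := by
      have hh : ∀ i ∈ Finset.range (l - n),
          (if n + i < n then (if j.testBit (n + i) ∧ dyadicBit a (n + i) = 1 then (-1:ℝ) else 1)
            else if n + i < l then (if j.testBit (n + i) then 0 else 2)
            else if n + i < l + r then 1 else (if j.testBit (n + i) then 0 else 2)) = 2 := by
        intro i hi
        have hiln := Finset.mem_range.1 hi
        rw [if_neg (by omega), if_pos (by omega), htbf1 (n + i) (by omega) (by omega)]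
        simp
      rw [Finset.prod_congr rfl hh, Finset.prod_const, Finset.card_range]
    have e3 : ∏ i ∈ Finset.range r,
        (if n + ((l - n) + i) < n then (if j.testBit (n + ((l - n) + i)) ∧ dyadicBit a (n + ((l - n) + i)) = 1 then (-1:ℝ) else 1)
          else if n + ((l - n) + i) < l then (if j.testBit (n + ((l - n) + i)) then 0 else 2)
          else if n + ((l - n) + i) < l + r then 1 else (if j.testBit (n + ((l - n) + i)) then 0 else 2))
        = 1 := by
      apply Finset.prod_eq_one
      intro i hi
      have hir := Finset.mem_range.1 hi
      rw [if_neg (by omega), if_neg (by omega), if_pos (by omega)]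
    have e4 : ∏ i ∈ Finset.range (N - l - r),
        (if n + ((l - n) + (r + i)) < n then (if j.testBit (n + ((l - n) + (r + i))) ∧ dyadicBit a (n + ((l - n) + (r + i))) = 1 then (-1:ℝ) else 1)
          else if n + ((l - n) + (r + i)) < l then (if j.testBit (n + ((l - n) + (r + i))) then 0 else 2)
          else if n + ((l - n) + (r + i)) < l + r then 1 else (if j.testBit (n + ((l - n) + (r + i))) then 0 else 2))
        = 2 ^ (N - l - r) := by
      have hh : ∀ i ∈ Finset.range (N - l - r),
          (if n + ((l - n) + (r + i)) < n then (if j.testBit (n + ((l - n) + (r + i))) ∧ dyadicBit a (n + ((l - n) + (r + i))) = 1 then (-1:ℝ) else 1)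
            else if n + ((l - n) + (r + i)) < l then (if j.testBit (n + ((l - n) + (r + i))) then 0 else 2)
            else if n + ((l - n) + (r + i)) < l + r then 1
            else (if j.testBit (n + ((l - n) + (r + i))) then 0 else 2)) = 2 := by
        intro i hi
        have hiN := Finset.mem_range.1 hi
        rw [if_neg (by omega), if_neg (by omega), if_neg (by omega),
          htbf2 (n + ((l - n) + (r + i))) (by omega)]
        simp
      rw [Finset.prod_congr rfl hh, Finset.prod_const, Finset.card_range]
    rw [e1, e2, e3, e4]
    have hpow : (2:ℝ) ^ (l - n) * (1 * 2 ^ (N - l - r)) * (2:ℝ) ^ (n + r) = 2 ^ N := by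
      rw [one_mul, mul_assoc, ← pow_add, ← pow_add]
      congr 1
      omega
    have hz : (2:ℝ) ^ (-(n:ℤ) - (r:ℤ)) = ((2:ℝ) ^ (n + r))⁻¹ := by
      rw [show -(n:ℤ) - (r:ℤ) = -((n + r : ℕ) : ℤ) by push_cast; ring]
      rw [zpow_neg, zpow_natCast]
    rw [hz]
    have h2N : (2:ℝ) ^ N ≠ 0 := by positivity
    have h2nr : (2:ℝ) ^ (n + r) ≠ 0 := by positivity
    field_simp
    linear_combination (walsh j a) * hpow
  · rw [if_neg hcond]
    -- find a bad bit
    have hbad : ∃ i0, i0 < N ∧ j.testBit i0 = true ∧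
        ((n ≤ i0 ∧ i0 < l) ∨ l + r ≤ i0) := by
      rcases not_and_or.1 hcond with hh | hh
      · have hc1 : 2 ^ n ≤ j % 2 ^ l := Nat.not_lt.1 hh
        obtain ⟨i0, hi0n, htb⟩ := Nat.exists_ge_and_testBit_of_ge_two_pow hc1
        have hi0l : i0 < l := by
          have h1 := Nat.ge_two_pow_of_testBit htb
          have h2 : j % 2 ^ l < 2 ^ l := Nat.mod_lt _ (Nat.two_pow_pos l)
          by_contra hc
          have := Nat.pow_le_pow_right (show 1 ≤ 2 by norm_num) (Nat.not_lt.1 hc)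
          omega
        have htbj : j.testBit i0 = true := by
          rw [Nat.testBit_mod_two_pow] at htb
          simpa [hi0l] using htb
        exact ⟨i0, by omega, htbj, Or.inl ⟨hi0n, hi0l⟩⟩
      · have hc2 : 2 ^ r ≤ j / 2 ^ l := Nat.not_lt.1 hh
        obtain ⟨d, hdr, htb⟩ := Nat.exists_ge_and_testBit_of_ge_two_pow hc2
        have htbj : j.testBit (l + d) = true := by
          rw [← Nat.shiftRight_eq_div_pow] at htb
          rw [← Nat.testBit_shiftRight]
          exact htb
        have hge := Nat.ge_two_pow_of_testBit htbj
        have hlt : l + d < j + 1 := by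
          by_contra hc
          have : 2 ^ (j + 1) ≤ 2 ^ (l + d) :=
            Nat.pow_le_pow_right (by norm_num) (Nat.not_lt.1 hc)
          have hj2 : j < 2 ^ (j + 1) :=
            lt_of_lt_of_le (Nat.lt_two_pow_self) (Nat.pow_le_pow_right (by norm_num) (Nat.le_succ _))
          omega
        exact ⟨l + d, by omega, htbj, Or.inr (by omega)⟩
    obtain ⟨i0, hi0N, htb, hreg⟩ := hbad
    have : (if i0 < n then (if j.testBit i0 ∧ dyadicBit a i0 = 1 then (-1:ℝ) else 1)
        else if i0 < l then (if j.testBit i0 then 0 else 2)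
        else if i0 < l + r then 1
        else (if j.testBit i0 then 0 else 2)) = 0 := by
      rcases hreg with ⟨h1, h2⟩ | h1
      · rw [if_neg (by omega), if_pos h2, if_pos htb]
      · rw [if_neg (by omega), if_neg (by omega), if_neg (by omega), if_pos htb]
    rw [Finset.prod_eq_zero (Finset.mem_range.2 hi0N) this]
    simp


lemma bad_countable (x : ℝ) :
    Set.Countable {t : ℝ | t ∈ Set.Ico (0:ℝ) 1 ∧
      ¬ ∀ N, ∃ i, N ≤ i ∧ dyadicBit x i = dyadicBit t i} := by
  apply Set.Countable.mono ?_ (Set.countable_iUnion (fun N : ℕ =>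
    Set.countable_iUnion (fun s : ℕ =>
      Set.countable_singleton ((s : ℝ) / 2 ^ N
        + ∑' i, ((1 - dyadicBit x (N + i) : ℕ) : ℝ) / 2 ^ (N + i + 1)))))
  rintro t ⟨ht01, hbad⟩
  push_neg at hbad
  obtain ⟨N, hN⟩ := hbad
  simp only [Set.mem_iUnion, Set.mem_singleton_iff]
  refine ⟨N, ⌊2 ^ N * t⌋₊, ?_⟩
  have hsum := summable_bits (dyadicBit t) (bit_le_one t)
  have hteq : t = ∑ i ∈ Finset.range N, (dyadicBit t i : ℝ) / 2 ^ (i + 1)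
      + ∑' i, (dyadicBit t (N + i) : ℝ) / 2 ^ (N + i + 1) := by
    conv_lhs => rw [← bits_tsum_self ht01]
    rw [← Summable.sum_add_tsum_nat_add N hsum]
    congr 1
    exact tsum_congr (fun i => by rw [add_comm i N])
  have htail : ∀ i : ℕ, dyadicBit t (N + i) = 1 - dyadicBit x (N + i) := by
    intro i
    have h1 := hN (N + i) (by omega)
    have h2 := bit_le_one t (N + i)
    have h3 := bit_le_one x (N + i)
    omega
  have htc : ∑' i, (dyadicBit t (N + i) : ℝ) / 2 ^ (N + i + 1)
      = ∑' i, ((1 - dyadicBit x (N + i) : ℕ) : ℝ) / 2 ^ (N + i + 1) :=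
    tsum_congr (fun i => by rw [htail i])
  calc t = ∑ i ∈ Finset.range N, (dyadicBit t i : ℝ) / 2 ^ (i + 1)
        + ∑' i, (dyadicBit t (N + i) : ℝ) / 2 ^ (N + i + 1) := hteq
    _ = (⌊2 ^ N * t⌋₊ : ℝ) / 2 ^ N
        + ∑' i, ((1 - dyadicBit x (N + i) : ℕ) : ℝ) / 2 ^ (N + i + 1) := by
        rw [partial_sum_bits ht01 N, htc]

lemma index_sum_split {l n r m p q : ℕ} (F : ℕ → ℝ)
    (hq : q ≤ 2 ^ n) (hnl : n ≤ l)
    (h1 : ∀ v u, v < p → u < 2 ^ n → v * 2 ^ l + u < m ∧ v < 2 ^ r)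
    (h2 : ∀ u, u < q → p * 2 ^ l + u < m ∧ p < 2 ^ r)
    (h3 : ∀ j, j < m → j % 2 ^ l < 2 ^ n → j / 2 ^ l < 2 ^ r →
      (j / 2 ^ l < p ∨ (j / 2 ^ l = p ∧ j % 2 ^ l < q))) :
    ∑ j ∈ (Finset.range m).filter
        (fun j => j % 2 ^ l < 2 ^ n ∧ j / 2 ^ l < 2 ^ r), F j
    = (∑ v ∈ Finset.range p, ∑ u ∈ Finset.range (2 ^ n), F (v * 2 ^ l + u))
      + ∑ u ∈ Finset.range q, F (p * 2 ^ l + u) := by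
  have h2l : 0 < 2 ^ l := Nat.two_pow_pos l
  have h2nl : 2 ^ n ≤ 2 ^ l := Nat.pow_le_pow_right (by norm_num) hnl
  have hdivmod : ∀ v u : ℕ, u < 2 ^ l →
      (v * 2 ^ l + u) / 2 ^ l = v ∧ (v * 2 ^ l + u) % 2 ^ l = u := by
    intro v u hu
    constructor
    · rw [show v * 2 ^ l + u = 2 ^ l * v + u by ring, Nat.mul_add_div h2l,
        Nat.div_eq_of_lt hu, add_zero]
    · rw [show v * 2 ^ l + u = 2 ^ l * v + u by ring, Nat.mul_add_mod, Nat.mod_eq_of_lt hu]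
  set B : Finset (ℕ × ℕ) :=
    (Finset.range p ×ˢ Finset.range (2 ^ n)) ∪ ({p} ×ˢ Finset.range q) with hB
  have hmemB : ∀ vu : ℕ × ℕ, vu ∈ B ↔
      ((vu.1 < p ∧ vu.2 < 2 ^ n) ∨ (vu.1 = p ∧ vu.2 < q)) := by
    intro vu
    rw [hB, Finset.mem_union, Finset.mem_product, Finset.mem_product]
    simp [Finset.mem_range, Finset.mem_singleton]
  have key : ∑ j ∈ (Finset.range m).filter
      (fun j => j % 2 ^ l < 2 ^ n ∧ j / 2 ^ l < 2 ^ r), F j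
      = ∑ vu ∈ B, F (vu.1 * 2 ^ l + vu.2) := by
    apply Finset.sum_nbij' (i := fun j => (j / 2 ^ l, j % 2 ^ l))
      (j := fun vu => vu.1 * 2 ^ l + vu.2)
    · intro j hj
      rw [Finset.mem_filter, Finset.mem_range] at hj
      obtain ⟨hjm, hj1, hj2⟩ := hj
      rw [hmemB]
      rcases h3 j hjm hj1 hj2 with h | h
      · exact Or.inl ⟨h, hj1⟩
      · exact Or.inr h
    · intro vu hvu
      rw [hmemB] at hvu
      rw [Finset.mem_filter, Finset.mem_range]
      obtain ⟨hd, hm⟩ := hdivmod vu.1 vu.2 (by rcases hvu with ⟨_, h⟩ | ⟨_, h⟩ <;> omega)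
      rcases hvu with ⟨hv, hu⟩ | ⟨hv, hu⟩
      · obtain ⟨hlt, hr⟩ := h1 vu.1 vu.2 hv hu
        exact ⟨hlt, by rw [hm]; omega, by rw [hd]; omega⟩
      · obtain ⟨hlt, hr⟩ := h2 vu.2 hu
        have hv2 : vu.1 * 2 ^ l = p * 2 ^ l := by rw [hv]
        exact ⟨by omega, by rw [hm]; omega, by rw [hd]; omega⟩
    · intro j hj
      rw [mul_comm]
      exact Nat.div_add_mod j (2 ^ l)
    · intro vu hvu
      rw [hmemB] at hvu
      obtain ⟨hd, hm⟩ := hdivmod vu.1 vu.2 (by rcases hvu with ⟨_, h⟩ | ⟨_, h⟩ <;> omega)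
      exact Prod.ext hd hm
    · intro j hj
      rw [mul_comm, Nat.div_add_mod j (2 ^ l)]
  rw [key, hB, Finset.sum_union, Finset.sum_product, Finset.sum_product]
  · simp
  · rw [Finset.disjoint_left]
    rintro ⟨v, u⟩ hv hu
    simp only [Finset.mem_product, Finset.mem_range, Finset.mem_singleton] at hv hu
    omega


lemma main_core (n l r : ℕ) (hnl : n ≤ l) (a : ℝ) (G : Set ℝ)
    (hGsub : G ⊆ Set.Ico (0:ℝ) 1)
    (hGmem : ∀ t, t ∈ Set.Ico (0:ℝ) 1 → (t ∈ G ↔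
      (∀ i, i < n → dyadicBit t i = dyadicBit a i) ∧
        ∀ i, l ≤ i → i < l + r → dyadicBit t i = 0))
    (habit : ∀ i, n ≤ i → dyadicBit a i = 0)
    (m p q : ℕ) (hq : q ≤ 2 ^ n)
    (h1 : ∀ v u, v < p → u < 2 ^ n → v * 2 ^ l + u < m ∧ v < 2 ^ r)
    (h2 : ∀ u, u < q → p * 2 ^ l + u < m ∧ p < 2 ^ r)
    (h3 : ∀ j, j < m → j % 2 ^ l < 2 ^ n → j / 2 ^ l < 2 ^ r →
      (j / 2 ^ l < p ∨ (j / 2 ^ l = p ∧ j % 2 ^ l < q)))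
    (x : ℝ) (hx : x ∈ Set.Ico (0:ℝ) 1) :
    walshSum m (Set.indicator G 1) x
      = (2:ℝ) ^ (-(n:ℤ) - (r:ℤ)) * walshDirichlet p (Int.fract (2 ^ l * x)) *
          walshDirichlet (2 ^ n) (dyadicAdd x a)
        + (2:ℝ) ^ (-(n:ℤ) - (r:ℤ)) * walsh (p * 2 ^ l) x *
          walshDirichlet q (dyadicAdd x a) := by
  have hgood_a : ∀ N, ∃ i, N ≤ i ∧ dyadicBit x i = dyadicBit a i := by
    intro N
    obtain ⟨i, hi, h0⟩ := inf_zero_bits hx (max N n)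
    exact ⟨i, by omega, by rw [h0, habit i (by omega)]⟩
  have hW5 : ∀ u, walsh u (dyadicAdd x a) = walsh u x * walsh u a :=
    walsh_dyadicAdd hgood_a
  have hW3 : ∀ v : ℕ, walsh (v * 2 ^ l) x = walsh v (Int.fract (2 ^ l * x)) :=
    fun v => walsh_shift hx.1
  have hW6 : ∀ v : ℕ, walsh (v * 2 ^ l) a = 1 := by
    intro v
    apply walsh_eq_one
    intro i hi
    rw [show v * 2 ^ l = 2 ^ l * v by ring, Nat.testBit_two_pow_mul] at hi
    rw [Bool.and_eq_true, decide_eq_true_eq] at hi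
    exact habit i (by omega)
  have hul : ∀ u : ℕ, u < 2 ^ n → u < 2 ^ l :=
    fun u hu => lt_of_lt_of_le hu (Nat.pow_le_pow_right (by norm_num) hnl)
  have hW2 : ∀ v u : ℕ, u < 2 ^ n → walsh (v * 2 ^ l + u) x * walsh (v * 2 ^ l + u) a
      = walsh v (Int.fract (2 ^ l * x)) * (walsh u x * walsh u a) := by
    intro v u hu
    rw [walsh_mul_split (hul u hu) x, walsh_mul_split (hul u hu) a, hW6, hW3]
    ring
  set bad := {t : ℝ | t ∈ Set.Ico (0:ℝ) 1 ∧
      ¬ ∀ N, ∃ i, N ≤ i ∧ dyadicBit x i = dyadicBit t i} with hbaddef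
  have hbadnull : volume bad = 0 := (bad_countable x).measure_zero _
  have hfac : ∀ t, t ∉ bad → walshDirichlet m (dyadicAdd x t) * Set.indicator G 1 t
      = ∑ j ∈ Finset.range m, walsh j x * (walsh j t * Set.indicator G 1 t) := by
    intro t htb
    by_cases hGt : t ∈ G
    · have ht01 := hGsub hGt
      have hgood : ∀ N, ∃ i, N ≤ i ∧ dyadicBit x i = dyadicBit t i := by
        by_contra hc
        exact htb ⟨ht01, hc⟩
      rw [walshDirichlet, Finset.sum_mul]
      apply Finset.sum_congr rfl
      intro j _
      rw [walsh_dyadicAdd hgood j]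
      ring
    · rw [Set.indicator_of_notMem hGt]
      simp
  have hae : ∀ᵐ t ∂(volume : Measure ℝ), t ∈ Set.uIoc (0:ℝ) 1 →
      walshDirichlet m (dyadicAdd x t) * Set.indicator G 1 t
      = ∑ j ∈ Finset.range m, walsh j x * (walsh j t * Set.indicator G 1 t) := by
    have hone : ∀ᵐ t ∂(volume : Measure ℝ), t ∉ bad := by
      rw [ae_iff]
      have he : {t : ℝ | ¬ t ∉ bad} = bad := by ext t; simp
      rw [he]
      exact hbadnull
    filter_upwards [hone] with t ht _
    exact hfac t ht
  rw [walshSum, intervalIntegral.integral_congr_ae hae,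
    intervalIntegral.integral_finset_sum
      (fun j _ => ((coeff_eval n l r hnl a G hGmem habit j).1.const_mul _))]
  have hval : ∀ j ∈ Finset.range m,
      ∫ t in (0:ℝ)..1, walsh j x * (walsh j t * Set.indicator G 1 t)
      = walsh j x * (if j % 2 ^ l < 2 ^ n ∧ j / 2 ^ l < 2 ^ r
          then (2:ℝ) ^ (-(n:ℤ) - (r:ℤ)) * walsh j a else 0) := by
    intro j _
    rw [intervalIntegral.integral_const_mul, (coeff_eval n l r hnl a G hGmem habit j).2]
  rw [Finset.sum_congr rfl hval]
  have hsplit : ∑ j ∈ Finset.range m, walsh j x *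
        (if j % 2 ^ l < 2 ^ n ∧ j / 2 ^ l < 2 ^ r
          then (2:ℝ) ^ (-(n:ℤ) - (r:ℤ)) * walsh j a else 0)
      = (2:ℝ) ^ (-(n:ℤ) - (r:ℤ)) * ∑ j ∈ (Finset.range m).filter
          (fun j => j % 2 ^ l < 2 ^ n ∧ j / 2 ^ l < 2 ^ r), walsh j x * walsh j a := by
    rw [Finset.mul_sum, Finset.sum_filter]
    apply Finset.sum_congr rfl
    intro j _
    split
    · ring
    · ring
  rw [hsplit, index_sum_split (fun j => walsh j x * walsh j a) hq hnl h1 h2 h3]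
  have hsum1 : ∑ v ∈ Finset.range p, ∑ u ∈ Finset.range (2 ^ n),
        (walsh (v * 2 ^ l + u) x * walsh (v * 2 ^ l + u) a)
      = walshDirichlet p (Int.fract (2 ^ l * x)) * walshDirichlet (2 ^ n) (dyadicAdd x a) := by
    rw [walshDirichlet, walshDirichlet, Finset.sum_mul]
    apply Finset.sum_congr rfl
    intro v _
    rw [Finset.mul_sum]
    apply Finset.sum_congr rfl
    intro u hu
    rw [hW5 u, hW2 v u (Finset.mem_range.1 hu)]
  have hsum2 : ∑ u ∈ Finset.range q, (walsh (p * 2 ^ l + u) x * walsh (p * 2 ^ l + u) a)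
      = walsh (p * 2 ^ l) x * walshDirichlet q (dyadicAdd x a) := by
    rw [walshDirichlet, Finset.mul_sum]
    apply Finset.sum_congr rfl
    intro u hu
    have hu2n : u < 2 ^ n := lt_of_lt_of_le (Finset.mem_range.1 hu) hq
    rw [hW5 u, walsh_mul_split (hul u hu2n) x, walsh_mul_split (hul u hu2n) a, hW6]
    ring
  rw [mul_add, hsum1, hsum2]
  ring

end S14


open S14

theorem stmt14 (n l r k : ℕ) (hnl : n ≤ l) (hk1 : 1 ≤ k) (hk2 : k ≤ 2 ^ n)
    (hr : 1 ≤ r) (m : ℕ) (hm : 1 ≤ m) :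
    ∃ p q : ℕ, p < 2 ^ r ∧ q ≤ 2 ^ n ∧
      ∀ x ∈ Set.Ico (0 : ℝ) 1,
        walshSum m
            (Set.indicator
              (Set.Ico (((k : ℝ) - 1) / 2 ^ n) ((k : ℝ) / 2 ^ n) ∩
                {y : ℝ | Int.fract (2 ^ l * y) ∈ Set.Ico (0 : ℝ) (1 / 2 ^ r)}) 1) x =
          (2 : ℝ) ^ (-(n : ℤ) - (r : ℤ)) * walshDirichlet p (Int.fract (2 ^ l * x)) *
              walshDirichlet (2 ^ n) (dyadicAdd x (((k : ℝ) - 1) / 2 ^ n)) +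
            (2 : ℝ) ^ (-(n : ℤ) - (r : ℤ)) * walsh (p * 2 ^ l) x *
              walshDirichlet q (dyadicAdd x (((k : ℝ) - 1) / 2 ^ n)) := by
  have h2n : (0:ℝ) < 2 ^ n := by positivity
  have h2l0 : 0 < 2 ^ l := Nat.two_pow_pos l
  have h2r1 : 1 ≤ 2 ^ r := Nat.one_le_two_pow
  have hs0 : k - 1 < 2 ^ n := by
    have := Nat.one_le_two_pow (n := n)
    omega
  have hkc : ((k : ℝ) - 1) = ((k - 1 : ℕ) : ℝ) := by
    have hk : k = (k - 1) + 1 := by omega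
    rw [hk]
    push_cast
    ring
  have hkc2 : (k : ℝ) = (((k - 1) + 1 : ℕ) : ℝ) := by
    push_cast [Nat.cast_sub hk1]
    ring
  set a : ℝ := ((k : ℝ) - 1) / 2 ^ n with hadef
  set G : Set ℝ := Set.Ico (((k : ℝ) - 1) / 2 ^ n) ((k : ℝ) / 2 ^ n) ∩
      {y : ℝ | Int.fract (2 ^ l * y) ∈ Set.Ico (0 : ℝ) (1 / 2 ^ r)} with hGdef
  have ha' : a = ((k - 1 : ℕ) : ℝ) / 2 ^ n := by rw [hadef, hkc]
  have habit : ∀ i, n ≤ i → dyadicBit a i = 0 := by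
    intro i hi
    rw [ha']
    exact bit_dyadic_rat_high hs0 hi
  have hGsub : G ⊆ Set.Ico (0:ℝ) 1 := by
    rintro t ⟨⟨ht1, ht2⟩, _⟩
    constructor
    · refine le_trans ?_ ht1
      rw [hkc]
      positivity
    · calc t < (k:ℝ) / 2 ^ n := ht2
        _ ≤ 1 := by
          rw [div_le_one h2n]
          exact_mod_cast hk2
  have hGmem : ∀ t, t ∈ Set.Ico (0:ℝ) 1 → (t ∈ G ↔
      (∀ i, i < n → dyadicBit t i = dyadicBit a i) ∧
        ∀ i, l ≤ i → i < l + r → dyadicBit t i = 0) := by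
    intro t ht
    have hcell := mem_cell_iff ht hs0
    have hfr := fract_lt_iff ht l r
    have hiff : t ∈ G ↔ (t ∈ Set.Ico (((k - 1 : ℕ) : ℝ) / 2 ^ n) ((((k - 1) + 1 : ℕ) : ℝ) / 2 ^ n))
        ∧ Int.fract (2 ^ l * t) < 1 / 2 ^ r := by
      rw [hGdef]
      constructor
      · rintro ⟨h1, h2⟩
        exact ⟨by rw [← hkc, ← hkc2]; exact h1, h2.2⟩
      · rintro ⟨h1, h2⟩
        refine ⟨by rw [hkc, hkc2]; exact h1, ⟨Int.fract_nonneg _, h2⟩⟩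
    rw [hiff, hcell, hfr, ha']
  rcases Nat.lt_or_ge (m / 2 ^ l) (2 ^ r) with hP | hP
  · -- non-saturated case
    refine ⟨m / 2 ^ l, min (m % 2 ^ l) (2 ^ n), hP, min_le_right _ _, ?_⟩
    intro x hx
    have h1 : ∀ v u, v < m / 2 ^ l → u < 2 ^ n → v * 2 ^ l + u < m ∧ v < 2 ^ r := by
      intro v u hv hu
      have h2nl : 2 ^ n ≤ 2 ^ l := Nat.pow_le_pow_right (by norm_num) hnl
      have hA : (v + 1) * 2 ^ l = v * 2 ^ l + 2 ^ l := by ring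
      have hB : (v + 1) * 2 ^ l ≤ (m / 2 ^ l) * 2 ^ l :=
        Nat.mul_le_mul_right _ (by omega)
      have hC : (m / 2 ^ l) * 2 ^ l ≤ m := Nat.div_mul_le_self m _
      omega
    have h2 : ∀ u, u < min (m % 2 ^ l) (2 ^ n) →
        (m / 2 ^ l) * 2 ^ l + u < m ∧ m / 2 ^ l < 2 ^ r := by
      intro u hu
      have hdm := Nat.div_add_mod m (2 ^ l)
      have hC : (m / 2 ^ l) * 2 ^ l = 2 ^ l * (m / 2 ^ l) := by ring
      have hmin := Nat.lt_min.1 hu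
      omega
    have h3 : ∀ j, j < m → j % 2 ^ l < 2 ^ n → j / 2 ^ l < 2 ^ r →
        (j / 2 ^ l < m / 2 ^ l ∨ (j / 2 ^ l = m / 2 ^ l ∧
          j % 2 ^ l < min (m % 2 ^ l) (2 ^ n))) := by
      intro j hjm hj1 hj2
      have hjd : j / 2 ^ l ≤ m / 2 ^ l := Nat.div_le_div_right (le_of_lt hjm)
      rcases Nat.lt_or_ge (j / 2 ^ l) (m / 2 ^ l) with h | h
      · exact Or.inl h
      · have heq : j / 2 ^ l = m / 2 ^ l := by omega
        have hdj := Nat.div_add_mod j (2 ^ l)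
        have hdm := Nat.div_add_mod m (2 ^ l)
        have hprod : 2 ^ l * (j / 2 ^ l) = 2 ^ l * (m / 2 ^ l) := by rw [heq]
        refine Or.inr ⟨heq, Nat.lt_min.2 ⟨by omega, hj1⟩⟩
    exact main_core n l r hnl a G hGsub hGmem habit m (m / 2 ^ l)
      (min (m % 2 ^ l) (2 ^ n)) (min_le_right _ _) h1 h2 h3 x hx
  · -- saturated case
    have hm2 : 2 ^ r * 2 ^ l ≤ m := (Nat.le_div_iff_mul_le h2l0).1 hP
    refine ⟨2 ^ r - 1, 2 ^ n, by omega, le_rfl, ?_⟩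
    intro x hx
    have h2nl : 2 ^ n ≤ 2 ^ l := Nat.pow_le_pow_right (by norm_num) hnl
    have h1 : ∀ v u, v < 2 ^ r - 1 → u < 2 ^ n → v * 2 ^ l + u < m ∧ v < 2 ^ r := by
      intro v u hv hu
      have hA : (v + 1) * 2 ^ l = v * 2 ^ l + 2 ^ l := by ring
      have hB : (v + 1) * 2 ^ l ≤ 2 ^ r * 2 ^ l :=
        Nat.mul_le_mul_right _ (by omega)
      omega
    have h2 : ∀ u, u < 2 ^ n → (2 ^ r - 1) * 2 ^ l + u < m ∧ 2 ^ r - 1 < 2 ^ r := by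
      intro u hu
      have hA : (2 ^ r - 1 + 1) * 2 ^ l = (2 ^ r - 1) * 2 ^ l + 2 ^ l := by ring
      have hB : 2 ^ r - 1 + 1 = 2 ^ r := by omega
      have hC : (2 ^ r - 1 + 1) * 2 ^ l = 2 ^ r * 2 ^ l := by rw [hB]
      omega
    have h3 : ∀ j, j < m → j % 2 ^ l < 2 ^ n → j / 2 ^ l < 2 ^ r →
        (j / 2 ^ l < 2 ^ r - 1 ∨ (j / 2 ^ l = 2 ^ r - 1 ∧ j % 2 ^ l < 2 ^ n)) := by
      intro j hjm hj1 hj2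
      omega
    exact main_core n l r hnl a G hGsub hGmem habit m (2 ^ r - 1)
      (2 ^ n) le_rfl h1 h2 h3 x hx
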